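/- Let ρ and ρ̃ be two-qubit density matrices. If there exist Q₁, Q₂ ∈ SO(3) such that r̃^{(1)} = Q₁ r^{(1)}, r̃^{(2)} = Q₂ r^{(2)}, and T̃ = Q₁ T Q₂ᵀ, then there exist U₁, U₂ ∈ SU(2) with ρ̃ = (U₁ ⊗ U₂) ρ (U₁ ⊗ U₂)†. -/
import Mathlib


open Matrix Complex BigOperators Kronecker
open scoped ComplexOrder

/-- The three Pauli matrices σ₁, σ₂, σ₃ (indexed by `Fin 3`). -/
noncomputable def pauli : Fin 3 → Matrix (Fin 2) (Fin 2) ℂ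
  | 0 => !![0, 1; 1, 0]
  | 1 => !![0, -Complex.I; Complex.I, 0]
  | 2 => !![1, 0; 0, -1]

/-- Marginal Bloch vector of the first qubit: `r⁽¹⁾_i = Tr (ρ (σ_i ⊗ 1))`. -/
noncomputable def bloch1 (ρ : Matrix (Fin 2 × Fin 2) (Fin 2 × Fin 2) ℂ) : Fin 3 → ℝ :=
  fun i => ((ρ * (pauli i ⊗ₖ (1 : Matrix (Fin 2) (Fin 2) ℂ))).trace).re

/-- Marginal Bloch vector of the second qubit: `r⁽²⁾_j = Tr (ρ (1 ⊗ σ_j))`. -/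
noncomputable def bloch2 (ρ : Matrix (Fin 2 × Fin 2) (Fin 2 × Fin 2) ℂ) : Fin 3 → ℝ :=
  fun j => ((ρ * ((1 : Matrix (Fin 2) (Fin 2) ℂ) ⊗ₖ pauli j)).trace).re

/-- Correlation matrix: `T_{ij} = Tr (ρ (σ_i ⊗ σ_j))`. -/
noncomputable def corr (ρ : Matrix (Fin 2 × Fin 2) (Fin 2 × Fin 2) ℂ) :
    Matrix (Fin 3) (Fin 3) ℝ :=
  Matrix.of fun i j => ((ρ * (pauli i ⊗ₖ pauli j)).trace).re

/-- Membership in SU(2): unitary 2×2 complex matrix of determinant 1. -/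
def IsSU2 (U : Matrix (Fin 2) (Fin 2) ℂ) : Prop := Uᴴ * U = 1 ∧ U.det = 1

/-- Membership in SO(3): orthogonal 3×3 real matrix of determinant 1. -/
def IsSO3 (Q : Matrix (Fin 3) (Fin 3) ℝ) : Prop := Qᵀ * Q = 1 ∧ Q.det = 1

set_option linter.unreachableTactic false
set_option linter.unusedTactic false

noncomputable def P4 : Fin 4 → Matrix (Fin 2) (Fin 2) ℂ :=
  ![1, pauli 0, pauli 1, pauli 2]

lemma pauli_complete (u w x y : Fin 2) :
    ∑ a : Fin 4, P4 a w u * P4 a x y = if u = x ∧ w = y then 2 else 0 := by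
  fin_cases u <;> fin_cases w <;> fin_cases x <;> fin_cases y <;>
    simp [P4, pauli, Fin.sum_univ_four, Matrix.one_apply] <;> ring_nf <;>
    simp [Complex.I_sq, Complex.ext_iff]

lemma sum_swap4 (G : Fin 4 → Fin 4 → (Fin 2 × Fin 2) → (Fin 2 × Fin 2) → ℂ) :
    (∑ a, ∑ b, ∑ p, ∑ q, G a b p q) = ∑ p, ∑ q, ∑ a, ∑ b, G a b p q := by
  have h1 : ∀ a : Fin 4, (∑ b : Fin 4, ∑ p : Fin 2 × Fin 2, ∑ q : Fin 2 × Fin 2, G a b p q)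
      = ∑ p : Fin 2 × Fin 2, ∑ q : Fin 2 × Fin 2, ∑ b : Fin 4, G a b p q := by
    intro a
    rw [Finset.sum_comm]
    exact Finset.sum_congr rfl fun p _ => Finset.sum_comm
  simp only [h1]
  rw [Finset.sum_comm]
  exact Finset.sum_congr rfl fun p _ => Finset.sum_comm

lemma expand4 (ρ : Matrix (Fin 2 × Fin 2) (Fin 2 × Fin 2) ℂ) :
    ρ = (1/4 : ℂ) • ∑ a : Fin 4, ∑ b : Fin 4,
      ((ρ * (P4 a ⊗ₖ P4 b)).trace) • (P4 a ⊗ₖ P4 b) := by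
  ext ⟨x, k⟩ ⟨y, l⟩
  simp only [Matrix.smul_apply, Matrix.sum_apply, smul_eq_mul, Matrix.trace, Matrix.diag,
    Matrix.mul_apply, Matrix.kroneckerMap_apply, Finset.sum_mul, Finset.mul_sum]
  rw [sum_swap4]
  have key : ∀ p q : Fin 2 × Fin 2,
      (∑ a : Fin 4, ∑ b : Fin 4, 1 / 4 * (ρ p q * (P4 a q.1 p.1 * P4 b q.2 p.2) * (P4 a x y * P4 b k l)))
      = 1 / 4 * (ρ p q * ((if p.1 = x ∧ q.1 = y then 2 else 0) * (if p.2 = k ∧ q.2 = l then 2 else 0))) := by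
    intro p q
    trans (∑ a : Fin 4, P4 a q.1 p.1 * P4 a x y) * (∑ b : Fin 4, P4 b q.2 p.2 * P4 b k l) * (ρ p q / 4)
    · rw [Finset.sum_mul_sum, Finset.sum_mul]
      exact Finset.sum_congr rfl fun a _ => by
        rw [Finset.sum_mul]
        exact Finset.sum_congr rfl fun b _ => by ring
    · rw [pauli_complete, pauli_complete]; ring
  simp only [key]
  rw [Fintype.sum_prod_type]
  simp only [Fintype.sum_prod_type, Fin.sum_univ_two]
  fin_cases x <;> fin_cases k <;> fin_cases y <;> fin_cases l <;> simp <;> ring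

def PRel (U : Matrix (Fin 2) (Fin 2) ℂ) (Q : Matrix (Fin 3) (Fin 3) ℝ) : Prop :=
  ∀ i, U * pauli i * Uᴴ = ∑ a : Fin 3, (Q a i : ℂ) • pauli a

noncomputable def Uz (θ : ℝ) : Matrix (Fin 2) (Fin 2) ℂ :=
  !![(Real.cos (θ/2) : ℂ) - Real.sin (θ/2) * Complex.I, 0;
     0, (Real.cos (θ/2) : ℂ) + Real.sin (θ/2) * Complex.I]

noncomputable def Uy (θ : ℝ) : Matrix (Fin 2) (Fin 2) ℂ :=
  !![(Real.cos (θ/2) : ℂ), -(Real.sin (θ/2) : ℂ);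
     (Real.sin (θ/2) : ℂ), (Real.cos (θ/2) : ℂ)]

noncomputable def Qz (θ : ℝ) : Matrix (Fin 3) (Fin 3) ℝ :=
  !![Real.cos θ, -Real.sin θ, 0; Real.sin θ, Real.cos θ, 0; 0, 0, 1]

noncomputable def Qy (θ : ℝ) : Matrix (Fin 3) (Fin 3) ℝ :=
  !![Real.cos θ, 0, Real.sin θ; 0, 1, 0; -Real.sin θ, 0, Real.cos θ]

lemma pyth (θ : ℝ) : Real.sin θ ^ 2 + Real.cos θ ^ 2 = 1 := Real.sin_sq_add_cos_sq θ

lemma isSU2_Uz (θ : ℝ) : IsSU2 (Uz θ) := by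
  obtain ⟨c, s, h, hU⟩ : ∃ c s : ℝ, s^2 + c^2 = 1 ∧
      Uz θ = !![(c : ℂ) - s * Complex.I, 0; 0, (c : ℂ) + s * Complex.I] :=
    ⟨_, _, pyth (θ/2), rfl⟩
  rw [hU]
  constructor
  · ext i j
    fin_cases i <;> fin_cases j <;>
      simp [Matrix.mul_apply, Fin.sum_univ_two, Matrix.one_apply, Complex.ext_iff] <;>
      first
      | rfl
      | (constructor <;> (first | trivial | nlinarith [h] | (ring_nf; nlinarith [h])))
      | nlinarith [h]
  · simp [Matrix.det_fin_two, Complex.ext_iff]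
    constructor <;> nlinarith [h]

lemma isSU2_Uy (θ : ℝ) : IsSU2 (Uy θ) := by
  obtain ⟨c, s, h, hU⟩ : ∃ c s : ℝ, s^2 + c^2 = 1 ∧
      Uy θ = !![(c : ℂ), -(s:ℂ); (s:ℂ), (c:ℂ)] :=
    ⟨_, _, pyth (θ/2), rfl⟩
  rw [hU]
  constructor
  · ext i j
    fin_cases i <;> fin_cases j <;>
      simp [Matrix.mul_apply, Fin.sum_univ_two, Matrix.one_apply, Complex.ext_iff] <;>
      first
      | rfl
      | (constructor <;> (first | trivial | nlinarith [h] | (ring_nf; nlinarith [h])))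
      | nlinarith [h]
  · simp [Matrix.det_fin_two]
    norm_cast
    nlinarith [h]

lemma double_s (θ : ℝ) : Real.sin θ = 2 * Real.sin (θ/2) * Real.cos (θ/2) := by
  have := Real.sin_two_mul (θ/2); rw [show 2*(θ/2) = θ by ring] at this; linarith

lemma double_c (θ : ℝ) : Real.cos θ = Real.cos (θ/2)^2 - Real.sin (θ/2)^2 := by
  have h1 := Real.cos_two_mul (θ/2)
  rw [show 2*(θ/2) = θ by ring] at h1
  have h2 := pyth (θ/2)
  linarith

lemma rel_Uz (θ : ℝ) : PRel (Uz θ) (Qz θ) := by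
  intro i
  obtain ⟨c, s, h, hs, hc, hU⟩ : ∃ c s : ℝ, s^2 + c^2 = 1 ∧
      Real.sin θ = 2*s*c ∧ Real.cos θ = c^2 - s^2 ∧
      Uz θ = !![(c : ℂ) - s * Complex.I, 0; 0, (c : ℂ) + s * Complex.I] :=
    ⟨_, _, pyth (θ/2), double_s θ, double_c θ, rfl⟩
  rw [hU]
  fin_cases i <;>
  · ext a b
    fin_cases a <;> fin_cases b <;>
      simp [Qz, pauli, Matrix.mul_apply, Fin.sum_univ_two, Fin.sum_univ_three,
        Matrix.sum_apply, Complex.ext_iff, hs, hc] <;>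
      ring_nf <;>
      (try simp only [← Complex.ofReal_pow, Complex.ofReal_re, Complex.ofReal_im]) <;>
      first
      | rfl
      | (constructor <;> (first | trivial | nlinarith [h] | (ring_nf; nlinarith [h])))
      | nlinarith [h]

lemma rel_Uy (θ : ℝ) : PRel (Uy θ) (Qy θ) := by
  intro i
  obtain ⟨c, s, h, hs, hc, hU⟩ : ∃ c s : ℝ, s^2 + c^2 = 1 ∧
      Real.sin θ = 2*s*c ∧ Real.cos θ = c^2 - s^2 ∧
      Uy θ = !![(c : ℂ), -(s:ℂ); (s:ℂ), (c:ℂ)] :=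
    ⟨_, _, pyth (θ/2), double_s θ, double_c θ, rfl⟩
  rw [hU]
  fin_cases i <;>
  · ext a b
    fin_cases a <;> fin_cases b <;>
      simp [Qy, pauli, Matrix.mul_apply, Fin.sum_univ_two, Fin.sum_univ_three,
        Matrix.sum_apply, Complex.ext_iff, hs, hc] <;>
      ring_nf <;>
      (try simp only [← Complex.ofReal_pow, Complex.ofReal_re, Complex.ofReal_im]) <;>
      first
      | rfl
      | (constructor <;> (first | trivial | nlinarith [h] | (ring_nf; nlinarith [h])))
      | nlinarith [h]

lemma isSU2_mul {U V : Matrix (Fin 2) (Fin 2) ℂ} (hU : IsSU2 U) (hV : IsSU2 V) :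
    IsSU2 (U * V) := by
  refine ⟨?_, by rw [Matrix.det_mul, hU.2, hV.2, one_mul]⟩
  rw [Matrix.conjTranspose_mul, Matrix.mul_assoc, ← Matrix.mul_assoc Uᴴ, hU.1, Matrix.one_mul, hV.1]

lemma prel_mul {U V : Matrix (Fin 2) (Fin 2) ℂ} {Q R : Matrix (Fin 3) (Fin 3) ℝ}
    (hU : PRel U Q) (hV : PRel V R) : PRel (U * V) (Q * R) := by
  intro i
  rw [Matrix.conjTranspose_mul]
  calc U * V * pauli i * (Vᴴ * Uᴴ) = U * (V * pauli i * Vᴴ) * Uᴴ := by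
        simp only [Matrix.mul_assoc]
    _ = U * (∑ a : Fin 3, (R a i : ℂ) • pauli a) * Uᴴ := by rw [hV i]
    _ = ∑ a : Fin 3, (R a i : ℂ) • (U * pauli a * Uᴴ) := by
        rw [Matrix.mul_sum, Matrix.sum_mul]
        exact Finset.sum_congr rfl fun a _ => by
          rw [Matrix.mul_smul, Matrix.smul_mul]
    _ = ∑ a : Fin 3, (R a i : ℂ) • ∑ b : Fin 3, (Q b a : ℂ) • pauli b := by
        simp only [show ∀ a, U * pauli a * Uᴴ = ∑ b : Fin 3, (Q b a : ℂ) • pauli b from hU]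
    _ = ∑ a : Fin 3, ∑ b : Fin 3, ((Q b a : ℂ) * (R a i : ℂ)) • pauli b := by
        refine Finset.sum_congr rfl fun a _ => ?_
        rw [Finset.smul_sum]
        exact Finset.sum_congr rfl fun b _ => by rw [smul_smul, mul_comm]
    _ = ∑ b : Fin 3, ∑ a : Fin 3, ((Q b a : ℂ) * (R a i : ℂ)) • pauli b := Finset.sum_comm
    _ = ∑ b : Fin 3, ((Q * R) b i : ℂ) • pauli b := by
        refine Finset.sum_congr rfl fun b _ => ?_
        rw [← Finset.sum_smul, Matrix.mul_apply]
        push_cast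
        rfl

lemma cos_sin_exists {c s : ℝ} (h : c^2 + s^2 = 1) :
    ∃ θ : ℝ, Real.cos θ = c ∧ Real.sin θ = s := by
  have hc1 : -1 ≤ c := by nlinarith
  have hc2 : c ≤ 1 := by nlinarith
  rcases le_or_gt 0 s with hs | hs
  · refine ⟨Real.arccos c, Real.cos_arccos hc1 hc2, ?_⟩
    rw [Real.sin_arccos]
    rw [show 1 - c^2 = s^2 by linarith, Real.sqrt_sq hs]
  · refine ⟨-Real.arccos c, by rw [Real.cos_neg]; exact Real.cos_arccos hc1 hc2, ?_⟩
    rw [Real.sin_neg, Real.sin_arccos]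
    rw [show 1 - c^2 = s^2 by linarith, Real.sqrt_sq_eq_abs, abs_of_neg hs]
    ring

lemma isSO3_Qz (θ : ℝ) : IsSO3 (Qz θ) := by
  have h := pyth θ
  have ht : (Qz θ)ᵀ = !![Real.cos θ, Real.sin θ, 0; -Real.sin θ, Real.cos θ, 0; 0, 0, 1] := by
    ext i j
    fin_cases i <;> fin_cases j <;> simp [Qz]
  constructor
  · rw [ht]
    ext i j
    fin_cases i <;> fin_cases j <;>
      simp [Qz, Matrix.mul_apply, Fin.sum_univ_three, Matrix.one_apply] <;> nlinarith [h]
  · simp [Qz, Matrix.det_fin_three]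
    nlinarith [h]

lemma isSO3_Qy (θ : ℝ) : IsSO3 (Qy θ) := by
  have h := pyth θ
  have ht : (Qy θ)ᵀ = !![Real.cos θ, 0, -Real.sin θ; 0, 1, 0; Real.sin θ, 0, Real.cos θ] := by
    ext i j
    fin_cases i <;> fin_cases j <;> simp [Qy]
  constructor
  · rw [ht]
    ext i j
    fin_cases i <;> fin_cases j <;>
      simp [Qy, Matrix.mul_apply, Fin.sum_univ_three, Matrix.one_apply] <;> nlinarith [h]
  · simp [Qy, Matrix.det_fin_three]
    nlinarith [h]

lemma isSO3_mul {A B : Matrix (Fin 3) (Fin 3) ℝ} (hA : IsSO3 A) (hB : IsSO3 B) :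
    IsSO3 (A * B) := by
  refine ⟨?_, by rw [Matrix.det_mul, hA.2, hB.2, one_mul]⟩
  rw [Matrix.transpose_mul, Matrix.mul_assoc, ← Matrix.mul_assoc Aᵀ, hA.1, Matrix.one_mul, hB.1]

lemma isSO3_transpose {A : Matrix (Fin 3) (Fin 3) ℝ} (hA : IsSO3 A) : IsSO3 Aᵀ := by
  refine ⟨?_, by rw [Matrix.det_transpose]; exact hA.2⟩
  rw [Matrix.transpose_transpose]
  exact mul_eq_one_comm.mp hA.1

set_option maxHeartbeats 800000 in
lemma euler {Q : Matrix (Fin 3) (Fin 3) ℝ} (hQ : IsSO3 Q) :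
    ∃ α β γ : ℝ, Q = Qz α * Qy β * Qz γ := by
  have hcol : ∀ i j, ∑ a : Fin 3, Q a i * Q a j = if i = j then 1 else 0 := by
    intro i j
    have := congrFun (congrFun hQ.1 i) j
    simpa [Matrix.mul_apply, Matrix.one_apply] using this
  have col2 : Q 0 2 ^ 2 + Q 1 2 ^ 2 + Q 2 2 ^ 2 = 1 := by
    have := hcol 2 2
    simp [Fin.sum_univ_three] at this
    nlinarith [this]
  set s : ℝ := Real.sqrt (Q 0 2 ^ 2 + Q 1 2 ^ 2) with hsdef
  have hs0 : 0 ≤ s := Real.sqrt_nonneg _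
  have hs2 : s ^ 2 = Q 0 2 ^ 2 + Q 1 2 ^ 2 := Real.sq_sqrt (by positivity)
  obtain ⟨β, hβc, hβs⟩ := cos_sin_exists (c := Q 2 2) (s := s) (by nlinarith)
  obtain ⟨α, hαc, hαs⟩ : ∃ α : ℝ, s * Real.cos α = Q 0 2 ∧ s * Real.sin α = Q 1 2 := by
    rcases eq_or_ne s 0 with h0 | h0
    · have h1 : Q 0 2 = 0 := by nlinarith
      have h2 : Q 1 2 = 0 := by nlinarith
      exact ⟨0, by simp [h0, h1], by simp [h0, h2]⟩
    · obtain ⟨α, h1, h2⟩ := cos_sin_exists (c := Q 0 2 / s) (s := Q 1 2 / s)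
        (by field_simp; nlinarith)
      refine ⟨α, ?_, ?_⟩
      · rw [h1]; field_simp
      · rw [h2]; field_simp
  obtain ⟨A, hAdef⟩ : ∃ A : Matrix (Fin 3) (Fin 3) ℝ, A = Qz α * Qy β := ⟨_, rfl⟩
  have hA : IsSO3 A := hAdef ▸ isSO3_mul (isSO3_Qz α) (isSO3_Qy β)
  have hAcol : ∀ b, A b 2 = Q b 2 := by
    intro b
    fin_cases b <;>
      simp [hAdef, Qz, Qy, Matrix.mul_apply, Fin.sum_univ_three] <;>
      first
      | linear_combination Real.cos α * hβs + hαc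
      | linear_combination Real.sin α * hβs + hαs
      | linear_combination hβc
  obtain ⟨R, hRdef⟩ : ∃ R : Matrix (Fin 3) (Fin 3) ℝ, R = Aᵀ * Q := ⟨_, rfl⟩
  have hR : IsSO3 R := hRdef ▸ isSO3_mul (isSO3_transpose hA) hQ
  have hQAR : Q = A * R := by
    rw [hRdef, ← Matrix.mul_assoc, mul_eq_one_comm.mp hA.1, Matrix.one_mul]
  have hRc : ∀ a, R a 2 = if a = (2 : Fin 3) then 1 else 0 := by
    intro a
    have h1 : R a 2 = ∑ b : Fin 3, A b a * A b 2 := by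
      simp [hRdef, Matrix.mul_apply, Matrix.transpose_apply, hAcol, mul_comm]
    rw [h1]
    have := congrFun (congrFun hA.1 a) 2
    simpa [Matrix.mul_apply, Matrix.transpose_apply, Matrix.one_apply] using this
  have h22 : R 2 2 = 1 := by simpa using hRc 2
  have h02 : R 0 2 = 0 := by simpa using hRc 0
  have h12 : R 1 2 = 0 := by simpa using hRc 1
  have hRR : R * Rᵀ = 1 := mul_eq_one_comm.mp hR.1
  have hrow2 : R 2 0 * R 2 0 + R 2 1 * R 2 1 + R 2 2 * R 2 2 = 1 := by
    have := congrFun (congrFun hRR 2) 2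
    simpa [Matrix.mul_apply, Matrix.transpose_apply, Fin.sum_univ_three, Matrix.one_apply]
      using this
  have h20 : R 2 0 = 0 := by nlinarith [sq_nonneg (R 2 0), sq_nonneg (R 2 1), h22]
  have h21 : R 2 1 = 0 := by nlinarith [sq_nonneg (R 2 0), sq_nonneg (R 2 1), h22]
  have hcolR : ∀ i j, ∑ a : Fin 3, R a i * R a j = if i = j then 1 else 0 := by
    intro i j
    have := congrFun (congrFun hR.1 i) j
    simpa [Matrix.mul_apply, Matrix.transpose_apply, Matrix.one_apply] using this
  have e00 : R 0 0 ^ 2 + R 1 0 ^ 2 = 1 := by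
    have := hcolR 0 0
    simp [Fin.sum_univ_three, h20] at this
    nlinarith [this]
  have e11 : R 0 1 ^ 2 + R 1 1 ^ 2 = 1 := by
    have := hcolR 1 1
    simp [Fin.sum_univ_three, h21] at this
    nlinarith [this]
  have e01 : R 0 0 * R 0 1 + R 1 0 * R 1 1 = 0 := by
    have := hcolR 0 1
    simp [Fin.sum_univ_three, h20, h21] at this
    linarith [this]
  have hdet : R 0 0 * R 1 1 - R 0 1 * R 1 0 = 1 := by
    have := hR.2
    rw [Matrix.det_fin_three] at this
    rw [h20, h21, h02, h12, h22] at this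
    linarith [this]
  have hd1 : R 1 1 = R 0 0 := by
    nlinarith [sq_nonneg (R 1 1 - R 0 0), sq_nonneg (R 0 1 + R 1 0)]
  have hd2 : R 0 1 = -(R 1 0) := by
    nlinarith [sq_nonneg (R 1 1 - R 0 0), sq_nonneg (R 0 1 + R 1 0)]
  obtain ⟨γ, hγc, hγs⟩ := cos_sin_exists (c := R 0 0) (s := R 1 0) e00
  refine ⟨α, β, γ, ?_⟩
  have hRQz : R = Qz γ := by
    ext i j
    fin_cases i <;> fin_cases j <;>
      simp [Qz, hγc, hγs, h20, h21, h02, h12, h22, hd1, hd2]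
  rw [hQAR, hAdef, hRQz]

lemma su2_lift {Q : Matrix (Fin 3) (Fin 3) ℝ} (hQ : IsSO3 Q) :
    ∃ U : Matrix (Fin 2) (Fin 2) ℂ, IsSU2 U ∧ PRel U Q := by
  obtain ⟨α, β, γ, rfl⟩ := euler hQ
  exact ⟨Uz α * Uy β * Uz γ,
    isSU2_mul (isSU2_mul (isSU2_Uz α) (isSU2_Uy β)) (isSU2_Uz γ),
    prel_mul (prel_mul (rel_Uz α) (rel_Uy β)) (rel_Uz γ)⟩

lemma prel_inv {U : Matrix (Fin 2) (Fin 2) ℂ} {Q : Matrix (Fin 3) (Fin 3) ℝ}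
    (hU : Uᴴ * U = 1) (hQ : Qᵀ * Q = 1) (h : PRel U Q) (j : Fin 3) :
    Uᴴ * pauli j * U = ∑ i : Fin 3, (Q j i : ℂ) • pauli i := by
  have hQQ : Q * Qᵀ = 1 := mul_eq_one_comm.mp hQ
  have key : U * (∑ i : Fin 3, (Q j i : ℂ) • pauli i) * Uᴴ = pauli j := by
    rw [Matrix.mul_sum, Matrix.sum_mul]
    calc (∑ i : Fin 3, (U * ((Q j i : ℂ) • pauli i)) * Uᴴ)
        = ∑ i : Fin 3, (Q j i : ℂ) • (U * pauli i * Uᴴ) := by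
          exact Finset.sum_congr rfl fun i _ => by rw [Matrix.mul_smul, Matrix.smul_mul]
      _ = ∑ i : Fin 3, (Q j i : ℂ) • ∑ a : Fin 3, (Q a i : ℂ) • pauli a := by
          simp only [show ∀ i, U * pauli i * Uᴴ = ∑ a : Fin 3, (Q a i : ℂ) • pauli a from h]
      _ = ∑ i : Fin 3, ∑ a : Fin 3, ((Q j i : ℂ) * (Q a i : ℂ)) • pauli a := by
          refine Finset.sum_congr rfl fun i _ => ?_
          rw [Finset.smul_sum]
          exact Finset.sum_congr rfl fun a _ => by rw [smul_smul]
      _ = ∑ a : Fin 3, ∑ i : Fin 3, ((Q j i : ℂ) * (Q a i : ℂ)) • pauli a := Finset.sum_comm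
      _ = ∑ a : Fin 3, (((Q * Qᵀ) j a : ℝ) : ℂ) • pauli a := by
          refine Finset.sum_congr rfl fun a _ => ?_
          rw [← Finset.sum_smul, Matrix.mul_apply]
          push_cast
          simp [Matrix.transpose_apply]
      _ = pauli j := by
          rw [hQQ]
          simp [Matrix.one_apply]
  calc Uᴴ * pauli j * U
      = Uᴴ * (U * (∑ i : Fin 3, (Q j i : ℂ) • pauli i) * Uᴴ) * U := by rw [key]
    _ = (Uᴴ * U) * (∑ i : Fin 3, (Q j i : ℂ) • pauli i) * (Uᴴ * U) := by
        simp only [Matrix.mul_assoc]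
    _ = ∑ i : Fin 3, (Q j i : ℂ) • pauli i := by rw [hU, Matrix.one_mul, Matrix.mul_one]

lemma kron_conjT (A B : Matrix (Fin 2) (Fin 2) ℂ) : (A ⊗ₖ B)ᴴ = Aᴴ ⊗ₖ Bᴴ := by
  ext ⟨i, j⟩ ⟨k, l⟩
  simp [Matrix.conjTranspose_apply, Matrix.kroneckerMap_apply, star_mul', mul_comm]

lemma pauli_herm (i : Fin 3) : (pauli i)ᴴ = pauli i := by
  fin_cases i <;>
  · ext a b
    fin_cases a <;> fin_cases b <;> simp [pauli]

lemma P4_herm (a : Fin 4) : (P4 a)ᴴ = P4 a := by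
  fin_cases a <;> simp [P4, pauli_herm]

lemma trace_herm_real {M : Matrix (Fin 2 × Fin 2) (Fin 2 × Fin 2) ℂ} (hM : Mᴴ = M)
    (K : Matrix (Fin 2 × Fin 2) (Fin 2 × Fin 2) ℂ) (hK : Kᴴ = K) :
    (((M * K).trace).re : ℂ) = (M * K).trace := by
  rw [← Complex.conj_eq_iff_re]
  calc (starRingEnd ℂ) ((M * K).trace) = ((M * K)ᴴ).trace := by
        rw [Matrix.trace_conjTranspose]; rfl
    _ = (Kᴴ * Mᴴ).trace := by rw [Matrix.conjTranspose_mul]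
    _ = (K * M).trace := by rw [hK, hM]
    _ = (M * K).trace := Matrix.trace_mul_comm _ _

lemma sum_kron (f : Fin 3 → Matrix (Fin 2) (Fin 2) ℂ) (B : Matrix (Fin 2) (Fin 2) ℂ) :
    (∑ i, f i) ⊗ₖ B = ∑ i, f i ⊗ₖ B := by
  ext ⟨i, j⟩ ⟨k, l⟩
  simp [Matrix.kroneckerMap_apply, Matrix.sum_apply, Finset.sum_mul]

lemma kron_sum (A : Matrix (Fin 2) (Fin 2) ℂ) (f : Fin 3 → Matrix (Fin 2) (Fin 2) ℂ) :
    A ⊗ₖ (∑ i, f i) = ∑ i, A ⊗ₖ f i := by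
  ext ⟨i, j⟩ ⟨k, l⟩
  simp [Matrix.kroneckerMap_apply, Matrix.sum_apply, Finset.mul_sum]

lemma conj_trace {U₁ U₂ : Matrix (Fin 2) (Fin 2) ℂ}
    (ρ : Matrix (Fin 2 × Fin 2) (Fin 2 × Fin 2) ℂ) (A B : Matrix (Fin 2) (Fin 2) ℂ) :
    (((U₁ ⊗ₖ U₂) * ρ * (U₁ ⊗ₖ U₂)ᴴ) * (A ⊗ₖ B)).trace
      = (ρ * ((U₁ᴴ * A * U₁) ⊗ₖ (U₂ᴴ * B * U₂))).trace := by
  rw [kron_conjT]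
  have h1 : ((U₁ ⊗ₖ U₂) * ρ * (U₁ᴴ ⊗ₖ U₂ᴴ)) * (A ⊗ₖ B)
      = (U₁ ⊗ₖ U₂) * (ρ * ((U₁ᴴ ⊗ₖ U₂ᴴ) * (A ⊗ₖ B))) := by
    simp only [Matrix.mul_assoc]
  rw [h1, Matrix.trace_mul_comm]
  have h2 : ρ * ((U₁ᴴ ⊗ₖ U₂ᴴ) * (A ⊗ₖ B)) * (U₁ ⊗ₖ U₂)
      = ρ * ((U₁ᴴ ⊗ₖ U₂ᴴ) * (A ⊗ₖ B) * (U₁ ⊗ₖ U₂)) := by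
    simp only [Matrix.mul_assoc]
  rw [h2, Matrix.mul_kronecker_mul, Matrix.mul_kronecker_mul]

lemma trace_kron_ss (ρ : Matrix (Fin 2 × Fin 2) (Fin 2 × Fin 2) ℂ) (c d : Fin 3 → ℝ) :
    (ρ * ((∑ k : Fin 3, (c k : ℂ) • pauli k) ⊗ₖ (∑ l : Fin 3, (d l : ℂ) • pauli l))).trace
      = ∑ k : Fin 3, ∑ l : Fin 3, (c k : ℂ) * (d l : ℂ) * (ρ * (pauli k ⊗ₖ pauli l)).trace := by
  rw [sum_kron, Matrix.mul_sum, Matrix.trace_sum]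
  refine Finset.sum_congr rfl fun k _ => ?_
  rw [kron_sum, Matrix.mul_sum, Matrix.trace_sum]
  refine Finset.sum_congr rfl fun l _ => ?_
  rw [Matrix.smul_kronecker, Matrix.kronecker_smul, smul_smul, Matrix.mul_smul,
    Matrix.trace_smul, smul_eq_mul]

lemma trace_kron_s1 (ρ : Matrix (Fin 2 × Fin 2) (Fin 2 × Fin 2) ℂ) (c : Fin 3 → ℝ) :
    (ρ * ((∑ k : Fin 3, (c k : ℂ) • pauli k) ⊗ₖ (1 : Matrix (Fin 2) (Fin 2) ℂ))).trace
      = ∑ k : Fin 3, (c k : ℂ) * (ρ * (pauli k ⊗ₖ (1 : Matrix (Fin 2) (Fin 2) ℂ))).trace := by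
  rw [sum_kron, Matrix.mul_sum, Matrix.trace_sum]
  refine Finset.sum_congr rfl fun k _ => ?_
  rw [Matrix.smul_kronecker, Matrix.mul_smul, Matrix.trace_smul, smul_eq_mul]

lemma trace_kron_1s (ρ : Matrix (Fin 2 × Fin 2) (Fin 2 × Fin 2) ℂ) (d : Fin 3 → ℝ) :
    (ρ * ((1 : Matrix (Fin 2) (Fin 2) ℂ) ⊗ₖ (∑ l : Fin 3, (d l : ℂ) • pauli l))).trace
      = ∑ l : Fin 3, (d l : ℂ) * (ρ * ((1 : Matrix (Fin 2) (Fin 2) ℂ) ⊗ₖ pauli l)).trace := by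
  rw [kron_sum, Matrix.mul_sum, Matrix.trace_sum]
  refine Finset.sum_congr rfl fun l _ => ?_
  rw [Matrix.kronecker_smul, Matrix.mul_smul, Matrix.trace_smul, smul_eq_mul]

lemma P4_0 : P4 0 = 1 := rfl
lemma P4_1 : P4 1 = pauli 0 := rfl
lemma P4_2 : P4 2 = pauli 1 := rfl
lemma P4_3 : P4 3 = pauli 2 := rfl

lemma b1c (σ : Matrix (Fin 2 × Fin 2) (Fin 2 × Fin 2) ℂ) (h : σᴴ = σ) (i : Fin 3) :
    (σ * (pauli i ⊗ₖ (1 : Matrix (Fin 2) (Fin 2) ℂ))).trace = ((bloch1 σ i : ℝ) : ℂ) :=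
  (trace_herm_real h _ (by rw [kron_conjT, Matrix.conjTranspose_one, pauli_herm])).symm

lemma b2c (σ : Matrix (Fin 2 × Fin 2) (Fin 2 × Fin 2) ℂ) (h : σᴴ = σ) (j : Fin 3) :
    (σ * ((1 : Matrix (Fin 2) (Fin 2) ℂ) ⊗ₖ pauli j)).trace = ((bloch2 σ j : ℝ) : ℂ) :=
  (trace_herm_real h _ (by rw [kron_conjT, Matrix.conjTranspose_one, pauli_herm])).symm

lemma corrc (σ : Matrix (Fin 2 × Fin 2) (Fin 2 × Fin 2) ℂ) (h : σᴴ = σ) (i j : Fin 3) :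
    (σ * (pauli i ⊗ₖ pauli j)).trace = ((corr σ i j : ℝ) : ℂ) :=
  (trace_herm_real h _ (by rw [kron_conjT, pauli_herm, pauli_herm])).symm


lemma P4_cases (a : Fin 4) : P4 a = 1 ∨ ∃ i : Fin 3, P4 a = pauli i := by
  fin_cases a
  exacts [Or.inl rfl, Or.inr ⟨0, rfl⟩, Or.inr ⟨1, rfl⟩, Or.inr ⟨2, rfl⟩]

set_option maxHeartbeats 3000000

/-- If the Bloch data of two two-qubit density matrices are related by
rotations `Q₁, Q₂ ∈ SO(3)` (`r̃⁽¹⁾ = Q₁ r⁽¹⁾`, `r̃⁽²⁾ = Q₂ r⁽²⁾`, `T̃ = Q₁ T Q₂ᵀ`),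
then the states are related by a local unitary `U₁ ⊗ U₂` with `U₁, U₂ ∈ SU(2)`. -/
theorem local_rotations_imply_local_unitary
    (ρ ρt : Matrix (Fin 2 × Fin 2) (Fin 2 × Fin 2) ℂ)
    (hρ : ρ.PosSemidef) (hρtr : ρ.trace = 1)
    (hρt : ρt.PosSemidef) (hρttr : ρt.trace = 1)
    (hrot : ∃ Q₁ Q₂ : Matrix (Fin 3) (Fin 3) ℝ, IsSO3 Q₁ ∧ IsSO3 Q₂ ∧
      bloch1 ρt = Q₁ *ᵥ bloch1 ρ ∧
      bloch2 ρt = Q₂ *ᵥ bloch2 ρ ∧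
      corr ρt = Q₁ * corr ρ * Q₂ᵀ) :
    ∃ U₁ U₂ : Matrix (Fin 2) (Fin 2) ℂ, IsSU2 U₁ ∧ IsSU2 U₂ ∧
      ρt = (U₁ ⊗ₖ U₂) * ρ * (U₁ ⊗ₖ U₂)ᴴ := by
  obtain ⟨Q₁, Q₂, hQ₁, hQ₂, h1, h2, hT⟩ := hrot
  obtain ⟨U₁, hU₁, hrel₁⟩ := su2_lift hQ₁
  obtain ⟨U₂, hU₂, hrel₂⟩ := su2_lift hQ₂
  refine ⟨U₁, U₂, hU₁, hU₂, ?_⟩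
  have hρh : ρᴴ = ρ := hρ.1
  have hρth : ρtᴴ = ρt := hρt.1
  have hinv₁ := prel_inv hU₁.1 hQ₁.1 hrel₁
  have hinv₂ := prel_inv hU₂.1 hQ₂.1 hrel₂
  have hone₁ : U₁ᴴ * 1 * U₁ = 1 := by rw [Matrix.mul_one, hU₁.1]
  have hone₂ : U₂ᴴ * 1 * U₂ = 1 := by rw [Matrix.mul_one, hU₂.1]
  have hkey : ∀ a b : Fin 4, (ρt * (P4 a ⊗ₖ P4 b)).trace
      = (((U₁ ⊗ₖ U₂) * ρ * (U₁ ⊗ₖ U₂)ᴴ) * (P4 a ⊗ₖ P4 b)).trace := by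
    intro a b
    rw [conj_trace]
    have case00 : (ρt * ((1 : Matrix (Fin 2) (Fin 2) ℂ) ⊗ₖ (1 : Matrix (Fin 2) (Fin 2) ℂ))).trace
        = (ρ * ((U₁ᴴ * 1 * U₁) ⊗ₖ (U₂ᴴ * 1 * U₂))).trace := by
      rw [hone₁, hone₂, Matrix.one_kronecker_one, Matrix.mul_one, Matrix.mul_one, hρttr, hρtr]
    have case10 : ∀ i : Fin 3,
        (ρt * (pauli i ⊗ₖ (1 : Matrix (Fin 2) (Fin 2) ℂ))).trace
        = (ρ * ((U₁ᴴ * pauli i * U₁) ⊗ₖ (U₂ᴴ * 1 * U₂))).trace := by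
      intro i
      rw [hone₂, hinv₁ i, trace_kron_s1, b1c ρt hρth]
      simp only [b1c ρ hρh]
      rw [congrFun h1 i]
      simp only [Matrix.mulVec, dotProduct]
      push_cast
      rfl
    have case01 : ∀ j : Fin 3,
        (ρt * ((1 : Matrix (Fin 2) (Fin 2) ℂ) ⊗ₖ pauli j)).trace
        = (ρ * ((U₁ᴴ * 1 * U₁) ⊗ₖ (U₂ᴴ * pauli j * U₂))).trace := by
      intro j
      rw [hone₁, hinv₂ j, trace_kron_1s, b2c ρt hρth]
      simp only [b2c ρ hρh]
      rw [congrFun h2 j]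
      simp only [Matrix.mulVec, dotProduct]
      push_cast
      rfl
    have case11 : ∀ i j : Fin 3,
        (ρt * (pauli i ⊗ₖ pauli j)).trace
        = (ρ * ((U₁ᴴ * pauli i * U₁) ⊗ₖ (U₂ᴴ * pauli j * U₂))).trace := by
      intro i j
      rw [hinv₁ i, hinv₂ j, trace_kron_ss, corrc ρt hρth]
      simp only [corrc ρ hρh]
      have : corr ρt i j = (Q₁ * corr ρ * Q₂ᵀ) i j := by rw [hT]
      rw [this]
      simp only [Matrix.mul_apply, Matrix.transpose_apply, Fin.sum_univ_three]
      push_cast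
      ring
    rcases P4_cases a with ha | ⟨i, ha⟩ <;> rcases P4_cases b with hb | ⟨j, hb⟩ <;>
      rw [ha, hb]
    exacts [case00, case01 _, case10 _, case11 _ _]
  rw [expand4 ρt]
  conv_rhs => rw [expand4 ((U₁ ⊗ₖ U₂) * ρ * (U₁ ⊗ₖ U₂)ᴴ)]
  simp only [hkey]
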